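/- arXiv:2206.02775 — 3 statements merged into one kernel-verified Lean document; each statement's English description precedes it below -/
import Mathlib

section
/- Let n ∈ ℕ with n ≥ 1 and λ, ρ ∈ ℚ with 0 ≤ λ < ρ ≤ 1, λ·n ≤ 1 ≤ ρ·n. Define u = ⌊(1 − nλ)/(ρ − λ)⌋ and assign probability ρ to u classes, probability 1 − ρu − λ(n − u − 1) to one class, and λ to the remaining n − u − 1 classes. Then these n values are each between λ and ρ and sum to 1. -/
/-- The greedy label construction (ρ to the first u classes, the leftover
1 − ρu − λ(n − u − 1) to the next, and λ to the remaining classes, where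
u = ⌊(1 − nλ)/(ρ − λ)⌋) yields n values each between λ and ρ that sum to 1. -/
theorem stmt_5 (n : ℕ) (lam rho : ℚ)
    (hn : 1 ≤ n)
    (hlam : 0 ≤ lam) (hlr : lam < rho) (hrho : rho ≤ 1)
    (hlamn : lam * n ≤ 1) (hrhon : 1 ≤ rho * n)
    (u : ℤ) (hu : u = ⌊(1 - n * lam) / (rho - lam)⌋)
    (v : Fin n → ℚ)
    (hv : ∀ i : Fin n,
      v i = if ((i : ℕ) + 1 : ℤ) ≤ u then rho
            else if ((i : ℕ) + 1 : ℤ) = u + 1 then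
              1 - rho * (u : ℚ) - lam * ((n : ℚ) - (u : ℚ) - 1)
            else lam) :
    (∀ i, lam ≤ v i ∧ v i ≤ rho) ∧ ∑ i, v i = 1 := by
  have hpos : 0 < rho - lam := by linarith
  have hle : (u : ℚ) ≤ (1 - n * lam) / (rho - lam) := by
    rw [hu]; exact Int.floor_le _
  have hlt : (1 - n * lam) / (rho - lam) < (u : ℚ) + 1 := by
    rw [hu]; exact Int.lt_floor_add_one _
  have hle' : (u : ℚ) * (rho - lam) ≤ 1 - n * lam := by
    rw [← le_div_iff₀ hpos]; exact hle
  have hlt' : 1 - n * lam < ((u : ℚ) + 1) * (rho - lam) := by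
    rw [← div_lt_iff₀ hpos]; exact hlt
  have hu0 : 0 ≤ u := by
    rw [hu]
    apply Int.floor_nonneg.mpr
    apply div_nonneg _ hpos.le
    linarith [hlamn]
  have hunQ : (u : ℚ) ≤ (n : ℚ) := by nlinarith
  have hun : u ≤ (n : ℤ) := by exact_mod_cast hunQ
  -- bounds on the middle value
  have hm1 : lam ≤ 1 - rho * (u : ℚ) - lam * ((n : ℚ) - (u : ℚ) - 1) := by nlinarith
  have hm2 : 1 - rho * (u : ℚ) - lam * ((n : ℚ) - (u : ℚ) - 1) ≤ rho := by nlinarith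
  constructor
  · intro i
    rw [hv i]
    split_ifs
    · exact ⟨hlr.le, le_refl _⟩
    · exact ⟨hm1, hm2⟩
    · exact ⟨le_refl _, hlr.le⟩
  · obtain ⟨k, hk⟩ : ∃ k : ℕ, u = (k : ℤ) := ⟨u.toNat, (Int.toNat_of_nonneg hu0).symm⟩
    have hkn : k ≤ n := by exact_mod_cast hk ▸ hun
    have hsum : ∑ i : Fin n, v i
        = ∑ i ∈ Finset.range n, (if i < k then rho
            else if i = k then 1 - rho * (u : ℚ) - lam * ((n : ℚ) - (u : ℚ) - 1)
            else lam) := by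
      rw [← Fin.sum_univ_eq_sum_range]
      apply Finset.sum_congr rfl
      intro i _
      rw [hv i]
      have h1 : (((i : ℕ) + 1 : ℤ) ≤ u) ↔ ((i : ℕ) < k) := by rw [hk]; omega
      have h2 : (((i : ℕ) + 1 : ℤ) = u + 1) ↔ ((i : ℕ) = k) := by rw [hk]; omega
      simp only [h1, h2]
    rw [hsum, ← Finset.sum_range_add_sum_Ico _ hkn]
    have hfirst : ∑ i ∈ Finset.range k, (if i < k then rho
            else if i = k then 1 - rho * (u : ℚ) - lam * ((n : ℚ) - (u : ℚ) - 1)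
            else lam) = k * rho := by
      rw [Finset.sum_congr rfl (fun i hi => by
        rw [if_pos (Finset.mem_range.mp hi)])]
      simp [mul_comm]
    rw [hfirst]
    rcases eq_or_lt_of_le hkn with heq | hlt2
    · subst heq
      have huk : ((u : ℚ)) = (k : ℚ) := by exact_mod_cast hk
      rw [huk] at hle'
      simp only [Finset.Ico_self, Finset.sum_empty, add_zero]
      nlinarith [hle', hrhon]
    · rw [Finset.sum_eq_sum_Ico_succ_bot hlt2]
      rw [if_neg (lt_irrefl k), if_pos rfl]
      have hrest : ∑ i ∈ Finset.Ico (k+1) n, (if i < k then rho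
            else if i = k then 1 - rho * (u : ℚ) - lam * ((n : ℚ) - (u : ℚ) - 1)
            else lam) = (n - (k+1) : ℕ) * lam := by
        rw [Finset.sum_congr rfl (fun i hi => by
          have := Finset.mem_Ico.mp hi
          rw [if_neg (by omega), if_neg (by omega)])]
        simp [mul_comm]
      rw [hrest]
      have hcast : ((n - (k+1) : ℕ) : ℚ) = (n : ℚ) - k - 1 := by
        have : k + 1 ≤ n := hlt2
        push_cast [Nat.cast_sub this]
        ring
      have huk : (u : ℚ) = (k : ℚ) := by exact_mod_cast hk
      rw [hcast, huk]
      ring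
end

section
/- Under the hypotheses λ·n ≤ 1 ≤ ρ·n with 0 ≤ λ < ρ ≤ 1, the leftover probability q = 1 − ρ·u − λ·(n − u − 1), where u = ⌊(1 − nλ)/(ρ − λ)⌋, satisfies λ ≤ q ≤ ρ. -/
/-- Under λ·n ≤ 1 ≤ ρ·n with 0 ≤ λ < ρ ≤ 1, the leftover probability
q = 1 − ρu − λ(n − u − 1), where u = ⌊(1 − nλ)/(ρ − λ)⌋, satisfies λ ≤ q ≤ ρ. -/
theorem stmt_6 (n : ℕ) (lam rho : ℚ)
    (hn : 1 ≤ n)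
    (hlam : 0 ≤ lam) (hlr : lam < rho) (hrho : rho ≤ 1)
    (hlamn : lam * n ≤ 1) (hrhon : 1 ≤ rho * n)
    (u : ℤ) (hu : u = ⌊(1 - n * lam) / (rho - lam)⌋)
    (q : ℚ) (hq : q = 1 - rho * (u : ℚ) - lam * ((n : ℚ) - (u : ℚ) - 1)) :
    lam ≤ q ∧ q ≤ rho := by
  have hd : 0 < rho - lam := sub_pos.2 hlr
  have h1 : (u:ℚ) ≤ (1 - n * lam) / (rho - lam) := hu ▸ Int.floor_le _
  have h2 : (1 - n * lam) / (rho - lam) < u + 1 := hu ▸ Int.lt_floor_add_one _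
  rw [le_div_iff₀ hd] at h1
  rw [div_lt_iff₀ hd] at h2
  constructor <;> nlinarith [h1, h2, hq]
end

section
/- Among all probability distributions on a finite set S assigning each element a probability in [α, β], the greedy distribution — which assigns probability β to the ⌊o⌋ cheapest elements (by a cost function K), the overflow mass to the next cheapest element, and α to the rest, where o = (1 − α|S|)/(β − α) — minimizes the expected cost E[K]. -/
/-- Abel summation by parts. -/
lemma abel_aux (a Kf : ℕ → ℚ) : ∀ n, ∑ j ∈ Finset.range n, a j * Kf j =
    (∑ j ∈ Finset.range n, a j) * Kf n -
    ∑ j ∈ Finset.range n, (∑ i ∈ Finset.range (j+1), a i) * (Kf (j+1) - Kf j) := by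
  intro n
  induction n with
  | zero => simp
  | succ n ih =>
    rw [Finset.sum_range_succ (fun j => a j * Kf j),
      Finset.sum_range_succ (fun j => (∑ i ∈ Finset.range (j+1), a i) * (Kf (j+1) - Kf j)),
      ih, Finset.sum_range_succ a]
    ring

/-- Among all probability distributions on a finite set (here sorted as
`Fin N` with nondecreasing cost `K`) that assign each element a probability in `[α, β]`,
the greedy distribution `G` (β to the first ⌊o⌋ elements, the overflow mass to the next,
and α to the rest, where o = (1 − αN)/(β − α)) minimizes the expected cost. -/
theorem stmt_7 (N : ℕ) (hN : 1 ≤ N) (K : Fin N → ℚ) (hK : Monotone K)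
    (α β : ℚ)
    (hα : 0 ≤ α) (hαβ : α < β) (hβ : β ≤ 1)
    (hβN : 1 ≤ β * N) (hαN : α * N ≤ 1)
    (o : ℚ) (ho : o = (1 - α * N) / (β - α))
    (G : Fin N → ℚ)
    (hG : ∀ j : Fin N,
      G j = if ((j : ℕ) + 1 : ℤ) ≤ ⌊o⌋ then β
            else if ((j : ℕ) + 1 : ℤ) = ⌊o⌋ + 1 then
              β * (o - (⌊o⌋ : ℚ)) + α * ((⌊o⌋ : ℚ) + 1 - o)
            else α)
    (D : Fin N → ℚ)
    (hDsum : ∑ j, D j = 1)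
    (hDbounds : ∀ j, α ≤ D j ∧ D j ≤ β) :
    ∑ j, G j * K j ≤ ∑ j, D j * K j := by
  have hβα : (0:ℚ) < β - α := by linarith
  have ho0 : 0 ≤ o := by
    rw [ho]
    apply div_nonneg <;> linarith
  have hoeq : o * (β - α) = 1 - α * N := by
    rw [ho]; field_simp
  have hoN : o ≤ (N:ℚ) := by
    nlinarith [hoeq]
  set k : ℕ := ⌊o⌋.toNat with hkdef
  have hkZ : (k : ℤ) = ⌊o⌋ := Int.toNat_of_nonneg (Int.floor_nonneg.2 ho0)
  have hkQ : (k : ℚ) ≤ o := by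
    have := Int.floor_le o
    rw [← hkZ] at this; push_cast at this; exact this
  have hok : o < (k : ℚ) + 1 := by
    have := Int.lt_floor_add_one o
    rw [← hkZ] at this; push_cast at this; exact this
  have hkN : k ≤ N := by
    have : (k : ℚ) ≤ (N : ℚ) := le_trans hkQ hoN
    exact_mod_cast this
  -- explicit form of G
  have hGval : ∀ j : Fin N, G j =
      if (j : ℕ) < k then β
      else if (j : ℕ) = k then β * (o - (k:ℚ)) + α * ((k:ℚ) + 1 - o)
      else α := by
    intro j
    rw [hG j, ← hkZ]
    push_cast
    split_ifs <;> first | rfl | (exfalso; omega)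
  -- extended functions
  set gx : ℕ → ℚ := fun n => if h : n < N then G ⟨n, h⟩ else 0 with hgx
  set dx : ℕ → ℚ := fun n => if h : n < N then D ⟨n, h⟩ else 0 with hdx
  set Kf : ℕ → ℚ := fun n => if h : n < N then K ⟨n, h⟩ else K ⟨N-1, by omega⟩ with hKf
  have hGnat : ∀ m (h : m < N), gx m =
      if m < k then β
      else if m = k then β * (o - (k:ℚ)) + α * ((k:ℚ) + 1 - o)
      else α := by
    intro m h
    simp only [hgx, dif_pos h]
    simpa using hGval ⟨m, h⟩
  -- prefix sums of greedy
  have hGp : ∀ m, m ≤ N → ∑ j ∈ Finset.range m, gx j =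
      if m ≤ k then β * m else 1 - α * ((N:ℚ) - m) := by
    intro m
    induction m with
    | zero => intro _; simp
    | succ m ih =>
      intro hm
      have hmN : m < N := by omega
      rw [Finset.sum_range_succ, ih (by omega), hGnat m hmN]
      rcases lt_trichotomy m k with h | h | h
      · rw [if_pos h, if_pos (by omega : m ≤ k), if_pos (by omega : m + 1 ≤ k)]
        push_cast; ring
      · rw [if_neg (by omega : ¬ m < k), if_pos h, if_pos (by omega : m ≤ k),
          if_neg (by omega : ¬ m + 1 ≤ k)]
        have hq : (m : ℚ) = (k : ℚ) := by exact_mod_cast congrArg (Nat.cast (R := ℚ)) h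
        push_cast
        linear_combination hoeq + (β - α) * hq
      · rw [if_neg (by omega : ¬ m < k), if_neg (by omega : m ≠ k),
          if_neg (by omega : ¬ m ≤ k), if_neg (by omega : ¬ m + 1 ≤ k)]
        push_cast; ring
  -- total of greedy is 1
  have hGp1 : ∑ j ∈ Finset.range N, gx j = 1 := by
    rw [hGp N le_rfl]
    rcases Nat.lt_or_ge N (k+1) with h | h
    · have hkN' : k = N := by omega
      rw [if_pos (by omega)]
      have hoN' : o = (N:ℚ) := by
        have h2 : (N : ℚ) ≤ o := by
          have : ((k:ℚ)) ≤ o := hkQ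
          rw [hkN'] at this; exact_mod_cast this
        linarith
      rw [hoN'] at hoeq
      linear_combination hoeq
    · rw [if_neg (by omega)]
      ring
  -- D total
  have hDp1 : ∑ j ∈ Finset.range N, dx j = 1 := by
    rw [← hDsum, ← Fin.sum_univ_eq_sum_range]
    apply Finset.sum_congr rfl
    intro j _
    simp [hdx, j.isLt]
  -- D prefix sums bounded by G prefix sums
  have hprefix : ∀ m, m ≤ N → ∑ j ∈ Finset.range m, dx j ≤ ∑ j ∈ Finset.range m, gx j := by
    intro m hm
    rw [hGp m hm]
    rcases Nat.lt_or_ge k m with h | h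
    · rw [if_neg (by omega)]
      have hsplit : (∑ j ∈ Finset.range m, dx j) + ∑ j ∈ Finset.Ico m N, dx j
          = ∑ j ∈ Finset.range N, dx j := by
        rw [Finset.range_eq_Ico, Finset.range_eq_Ico]
        exact Finset.sum_Ico_consecutive dx (Nat.zero_le m) hm
      have hlow : α * ((N:ℚ) - m) ≤ ∑ j ∈ Finset.Ico m N, dx j := by
        have hb : ∀ j ∈ Finset.Ico m N, α ≤ dx j := by
          intro j hj
          rw [Finset.mem_Ico] at hj
          simp only [hdx, dif_pos hj.2]
          exact (hDbounds _).1
        calc α * ((N:ℚ) - m) = (Finset.Ico m N).card • α := by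
              rw [Nat.card_Ico, nsmul_eq_mul]
              rw [Nat.cast_sub hm]; ring
          _ ≤ ∑ j ∈ Finset.Ico m N, dx j := Finset.card_nsmul_le_sum _ _ _ hb
      rw [hDp1] at hsplit
      linarith
    · rw [if_pos h]
      have hb : ∀ j ∈ Finset.range m, dx j ≤ β := by
        intro j hj
        rw [Finset.mem_range] at hj
        have hjN : j < N := by omega
        simp only [hdx, dif_pos hjN]
        exact (hDbounds _).2
      calc ∑ j ∈ Finset.range m, dx j ≤ ∑ _j ∈ Finset.range m, β :=
            Finset.sum_le_sum hb
        _ = β * m := by rw [Finset.sum_const, Finset.card_range, nsmul_eq_mul]; ring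
  -- Abel summation
  have habel := abel_aux (fun j => dx j - gx j) Kf N
  have hFN : ∑ j ∈ Finset.range N, (dx j - gx j) = 0 := by
    rw [Finset.sum_sub_distrib, hDp1, hGp1]; ring
  have hterm : ∀ j ∈ Finset.range N,
      0 ≤ -((∑ i ∈ Finset.range (j+1), (dx i - gx i)) * (Kf (j+1) - Kf j)) := by
    intro j hj
    rw [Finset.mem_range] at hj
    have hF : ∑ i ∈ Finset.range (j+1), (dx i - gx i) ≤ 0 := by
      rw [Finset.sum_sub_distrib]
      have := hprefix (j+1) (by omega)
      linarith
    have hKmono : Kf j ≤ Kf (j+1) := by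
      simp only [hKf]
      rcases Nat.lt_or_ge (j+1) N with h | h
      · rw [dif_pos hj, dif_pos h]
        exact hK (by simp [Fin.le_def])
      · have hjN : j = N - 1 := by omega
        rw [dif_pos hj, dif_neg (by omega)]
        apply le_of_eq; congr 1
        simp [Fin.ext_iff, hjN]
    nlinarith
  have hsum_nonneg : 0 ≤ ∑ j ∈ Finset.range N, (dx j - gx j) * Kf j := by
    rw [habel, hFN]
    have h1 : 0 ≤ ∑ j ∈ Finset.range N,
        -((∑ i ∈ Finset.range (j+1), (dx i - gx i)) * (Kf (j+1) - Kf j)) :=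
      Finset.sum_nonneg hterm
    rw [Finset.sum_neg_distrib] at h1
    linarith
  -- translate back
  have hGsum : ∑ j, G j * K j = ∑ j ∈ Finset.range N, gx j * Kf j := by
    rw [← Fin.sum_univ_eq_sum_range (fun n => gx n * Kf n) N]
    apply Finset.sum_congr rfl
    intro j _
    simp [hgx, hKf, j.isLt]
  have hDsum' : ∑ j, D j * K j = ∑ j ∈ Finset.range N, dx j * Kf j := by
    rw [← Fin.sum_univ_eq_sum_range (fun n => dx n * Kf n) N]
    apply Finset.sum_congr rfl
    intro j _
    simp [hdx, hKf, j.isLt]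
  have hdiff : ∑ j ∈ Finset.range N, (dx j - gx j) * Kf j =
      ∑ j ∈ Finset.range N, dx j * Kf j - ∑ j ∈ Finset.range N, gx j * Kf j := by
    rw [← Finset.sum_sub_distrib]
    apply Finset.sum_congr rfl
    intro j _; ring
  rw [hGsum, hDsum']
  linarith [hsum_nonneg, hdiff.symm ▸ hsum_nonneg]
end
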